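/- Under the assumptions Re γ ≠ 0 and Im γ ∉ 2πℤ, there exists a constant C' > 0 independent of k such that |Im √(β_k(γ))| ≥ C' √(1 + (2πk)²) for all integers k, where √ denotes the principal square root. -/

import Mathlib

/-!
Write `γ + 2πik = r + i t` with `r = Re γ` and `t = Im γ + 2πk`, and let `w = √β_k`, so that
`w² = (r + i t)² + κ²`. Comparing real parts gives `(Im w)² ≥ t² - r² - κ²`, which settles large `|t|`;
comparing imaginary parts gives `2 r t = 2 (Re w)(Im w)` with `(Re w)² ≤ |β_k| ≤ r² + κ² + t²`, which
settles bounded `|t|` because `|t|` stays away from `0` when `Im γ ∉ 2πℤ`. Peetre's inequality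
`1 + (t - s)² ≤ 2 (1 + s²)(1 + t²)` converts the bound in `t` into one in `2πk`.
-/

open Complex Real

lemma exists_pos_le_abs_add_intCast {x : ℝ} (hx : ∀ m : ℤ, x ≠ m) :
    ∃ δ > 0, ∀ k : ℤ, δ ≤ |x + k| :=
  ⟨|x - round x|, abs_pos.2 (sub_ne_zero.2 (hx _)), fun k => by
    simpa using round_le x (-k)⟩

lemma exists_pos_le_abs_add_two_pi_mul_intCast {s : ℝ} (hs : ∀ m : ℤ, s ≠ 2 * π * m) :
    ∃ δ > 0, ∀ k : ℤ, δ ≤ |s + 2 * π * k| := by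
  have hπ : 0 < 2 * π := by positivity
  obtain ⟨δ, hδ, hle⟩ := exists_pos_le_abs_add_intCast (x := s / (2 * π)) fun m h =>
    hs m (by rw [div_eq_iff hπ.ne'] at h; linarith)
  refine ⟨2 * π * δ, by positivity, fun k => ?_⟩
  have hscale : s + 2 * π * k = 2 * π * (s / (2 * π) + k) := by field_simp
  rw [hscale, abs_mul, abs_of_pos hπ]
  exact mul_le_mul_of_nonneg_left (hle k) hπ.le

lemma one_add_sq_sub_le (s t : ℝ) : 1 + (t - s) ^ 2 ≤ 2 * (1 + s ^ 2) * (1 + t ^ 2) := by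
  nlinarith [sq_nonneg (1 + s * t), sq_nonneg s, sq_nonneg t, sq_nonneg (s * t)]

namespace Complex

lemma cpow_one_div_two_sq (z : ℂ) : (z ^ ((1 : ℂ) / 2)) ^ 2 = z := by
  rw [one_div]
  exact cpow_ofNat_inv_pow z 2

lemma neg_re_sq_le_im_sq (w : ℂ) : -(w ^ 2).re ≤ w.im ^ 2 := by
  simp only [sq, mul_re]
  nlinarith [sq_nonneg w.re]

lemma sq_im_sq_le (w : ℂ) : (w ^ 2).im ^ 2 ≤ 4 * ‖w ^ 2‖ * w.im ^ 2 := by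
  rw [norm_pow, Complex.sq_norm, normSq_apply]
  simp only [sq, mul_im]
  nlinarith [sq_nonneg (w.im * w.im)]

end Complex

lemma exists_mul_one_add_sq_le_sq_im_sqrt {r : ℝ} (hr : r ≠ 0) (κ : ℝ) {δ : ℝ} (hδ : 0 < δ) :
    ∃ c > 0, ∀ t : ℝ, δ ≤ |t| →
      c * (1 + t ^ 2) ≤ (((r + t * I) ^ 2 + κ ^ 2) ^ ((1 : ℂ) / 2)).im ^ 2 := by
  set A := r ^ 2 + κ ^ 2 with hA_def
  have hA : 0 ≤ A := by positivity
  refine ⟨min (1 / 2) (r ^ 2 * δ ^ 2 / (6 * (A + 1) ^ 2)), by positivity, fun t ht => ?_⟩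
  have hw := cpow_one_div_two_sq ((r + t * I) ^ 2 + κ ^ 2)
  set w := ((r + t * I) ^ 2 + κ ^ 2) ^ ((1 : ℂ) / 2)
  have hre : (w ^ 2).re = A - t ^ 2 := by
    rw [hw, hA_def]
    simp only [sq, add_re, add_im, mul_re, mul_im, ofReal_re, ofReal_im, I_re, I_im]
    ring
  have him : (w ^ 2).im = 2 * r * t := by
    rw [hw]
    simp only [sq, add_re, add_im, mul_re, mul_im, ofReal_re, ofReal_im, I_re, I_im]
    ring
  have hnorm : ‖w ^ 2‖ ≤ A + t ^ 2 := by
    rw [hw]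
    calc ‖(r + t * I) ^ 2 + (κ : ℂ) ^ 2‖ ≤ ‖(r + t * I) ^ 2‖ + ‖(κ : ℂ) ^ 2‖ := norm_add_le _ _
      _ = A + t ^ 2 := by
        rw [norm_pow, norm_pow, Complex.sq_norm, normSq_add_mul_I, norm_real, Real.norm_eq_abs,
          sq_abs]
        ring
  rcases le_total (2 * (A + 1)) (1 + t ^ 2) with hlarge | hsmall
  · calc _ ≤ 1 / 2 * (1 + t ^ 2) := by gcongr; exact min_le_left _ _
      _ ≤ t ^ 2 - A := by linarith
      _ ≤ w.im ^ 2 := by linarith [w.neg_re_sq_le_im_sq]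
  · have hδt : δ ^ 2 ≤ t ^ 2 := by simpa using pow_le_pow_left₀ hδ.le ht 2
    have hrδ : r ^ 2 * δ ^ 2 ≤ 3 * (A + 1) * w.im ^ 2 := by
      have hsq := w.sq_im_sq_le
      rw [him] at hsq
      calc r ^ 2 * δ ^ 2 ≤ r ^ 2 * t ^ 2 := by gcongr
        _ ≤ ‖w ^ 2‖ * w.im ^ 2 := by linarith
        _ ≤ 3 * (A + 1) * w.im ^ 2 := by gcongr; linarith
    calc _ ≤ r ^ 2 * δ ^ 2 / (6 * (A + 1) ^ 2) * (2 * (A + 1)) := by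
          gcongr
          exact min_le_right _ _
      _ = r ^ 2 * δ ^ 2 / (3 * (A + 1)) := by field_simp; ring
      _ ≤ w.im ^ 2 := by rw [div_le_iff₀ (by positivity)]; linarith

theorem stmt2 (γ : ℂ) (κ : ℝ) (hre : γ.re ≠ 0)
    (him : ∀ m : ℤ, γ.im ≠ 2 * Real.pi * m) :
    ∃ C' : ℝ, 0 < C' ∧ ∀ k : ℤ,
      C' * Real.sqrt (1 + (2 * Real.pi * k) ^ 2)
        ≤ |((((γ + 2 * Real.pi * Complex.I * k) ^ 2 + (κ : ℂ) ^ 2)) ^ ((1 : ℂ) / 2)).im| := by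
  obtain ⟨δ, hδ, hδk⟩ := exists_pos_le_abs_add_two_pi_mul_intCast him
  obtain ⟨c, hc, hbound⟩ := exists_mul_one_add_sq_le_sq_im_sqrt hre κ hδ
  set s := γ.im
  refine ⟨√(c / (2 * (1 + s ^ 2))), by positivity, fun k => ?_⟩
  have hγ : γ + 2 * π * I * k = γ.re + ((s + 2 * π * k : ℝ) : ℂ) * I := by
    apply Complex.ext <;> simp [s]
  rw [hγ, ← Real.sqrt_sq_eq_abs, ← Real.sqrt_mul (by positivity)]
  refine Real.sqrt_le_sqrt (le_trans ?_ (hbound _ (hδk k)))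
  calc c / (2 * (1 + s ^ 2)) * (1 + (2 * π * k) ^ 2)
      ≤ c / (2 * (1 + s ^ 2)) * (2 * (1 + s ^ 2) * (1 + (s + 2 * π * k) ^ 2)) := by
        gcongr
        simpa using one_add_sq_sub_le s (s + 2 * π * k)
    _ = c * (1 + (s + 2 * π * k) ^ 2) := by field_simp
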